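/- arXiv:math/0504019 — 7 statements merged into one kernel-verified Lean document; each statement's English description precedes it below -/
import Mathlib

section
/- Let $Y$ be a real Hilbert space and $\varphi : Y \to \mathbb{R}$ a sequentially weakly upper semicontinuous $C^1$ functional whose derivative is Lipschitz with constant $\nu < 1$. Then for every $y_0 \in Y$, the functional $y \mapsto \tfrac{1}{2}\|y - y_0\|^2 - \varphi(y)$ has a unique local minimum, which is also its unique global minimum. -/
open scoped NNReal RealInnerProductSpace

open Filter

/-!
The minimiser is the fixed point `y` of the contraction `T z = y₀ + φ' z`. The gradient of
`F z = ½‖z - y₀‖² - φ z` is `z - T z`, which is a monotone operator because `T` is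
`1`-Lipschitz; hence `F` increases along every ray from its critical point `y`, so `y` is a
global minimum. Any local minimum is a critical point, i.e. a fixed point of `T`, so it equals `y`.
-/

section

variable {E : Type*} [NormedAddCommGroup E] [InnerProductSpace ℝ E]

theorem LipschitzWith.inner_sub_self_nonneg {K : ℝ≥0} {T : E → E} (hT : LipschitzWith K T)
    (hK : K ≤ 1) (a b : E) : 0 ≤ ⟪(a - T a) - (b - T b), a - b⟫ := by
  have hTab : ‖T a - T b‖ ≤ ‖a - b‖ := by
    simpa [dist_eq_norm] using (hT.dist_le_mul a b).trans (mul_le_of_le_one_left dist_nonneg hK)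
  have hcs : ⟪T a - T b, a - b⟫ ≤ ‖a - b‖ ^ 2 :=
    (real_inner_le_norm _ _).trans (by nlinarith [norm_nonneg (a - b)])
  rw [sub_sub_sub_comm, inner_sub_left, real_inner_self_eq_norm_sq]
  linarith

variable [CompleteSpace E]

theorem HasGradientAt.eq_zero_of_isLocalMin {f : E → ℝ} {g x : E} (hf : HasGradientAt f g x)
    (hx : IsLocalMin f x) : g = 0 :=
  (InnerProductSpace.toDual ℝ E).map_eq_zero_iff.1 <|
    hx.hasFDerivAt_eq_zero (hasGradientAt_iff_hasFDerivAt.1 hf)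

theorem HasGradientAt.sub {f g : E → ℝ} {f' g' x : E} (hf : HasGradientAt f f' x)
    (hg : HasGradientAt g g' x) : HasGradientAt (fun z => f z - g z) (f' - g') x := by
  rw [hasGradientAt_iff_hasFDerivAt, map_sub]
  exact (hasGradientAt_iff_hasFDerivAt.1 hf).sub (hasGradientAt_iff_hasFDerivAt.1 hg)

theorem hasGradientAt_half_norm_sub_sq (c x : E) :
    HasGradientAt (fun z => (1 / 2 : ℝ) * ‖z - c‖ ^ 2) (x - c) x := by
  rw [hasGradientAt_iff_hasFDerivAt]
  refine ((((hasFDerivAt_id x).sub_const c).norm_sq).const_mul (1 / 2 : ℝ)).congr_fderiv ?_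
  ext v
  simp

theorem HasGradientAt.hasDerivAt_line {f : E → ℝ} {g x v : E} {t : ℝ}
    (hf : HasGradientAt f g (x + t • v)) :
    HasDerivAt (fun s : ℝ => f (x + s • v)) ⟪g, v⟫ t := by
  have hline : HasDerivAt (fun s : ℝ => x + s • v) v t := by
    simpa using ((hasDerivAt_id t).smul_const v).const_add x
  simpa [Function.comp_def] using
    (hasGradientAt_iff_hasFDerivAt.1 hf).comp_hasDerivAt t hline

theorem le_of_hasGradientAt_of_monotone {f : E → ℝ} {f' : E → E}
    (hf : ∀ x, HasGradientAt f (f' x) x) (hmono : ∀ a b, 0 ≤ ⟪f' a - f' b, a - b⟫)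
    {y : E} (hy : f' y = 0) (x : E) : f y ≤ f x := by
  set v := x - y
  have hderiv (t : ℝ) : HasDerivAt (fun s : ℝ => f (y + s • v)) ⟪f' (y + t • v), v⟫ t :=
    (hf _).hasDerivAt_line
  -- `t ⟪f' (y + t v), v⟫ = ⟪f' (y + t v) - f' y, t v⟫ ≥ 0`
  have hslope : ∀ t ∈ interior (Set.Icc (0 : ℝ) 1), 0 ≤ ⟪f' (y + t • v), v⟫ := by
    intro t ht
    rw [interior_Icc] at ht
    have h := hmono (y + t • v) y
    rw [hy, sub_zero, add_sub_cancel_left, real_inner_smul_right] at h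
    exact nonneg_of_mul_nonneg_right (by linarith) ht.1
  have hmon : MonotoneOn (fun s : ℝ => f (y + s • v)) (Set.Icc 0 1) :=
    monotoneOn_of_hasDerivWithinAt_nonneg (convex_Icc 0 1)
      (fun t _ => (hderiv t).continuousAt.continuousWithinAt)
      (fun t _ => (hderiv t).hasDerivWithinAt) hslope
  simpa [v] using hmon (Set.left_mem_Icc.2 zero_le_one) (Set.right_mem_Icc.2 zero_le_one) zero_le_one

end

theorem stmt6_general {Y : Type*} [NormedAddCommGroup Y] [InnerProductSpace ℝ Y] [CompleteSpace Y]
    (φ : Y → ℝ) (φ' : Y → Y)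
    (hgrad : ∀ y : Y, HasGradientAt φ (φ' y) y)
    (ν : ℝ≥0) (hν : (ν : ℝ) < 1) (hLip : LipschitzWith ν φ')
    (y₀ : Y) :
    ∃ y : Y,
      IsLocalMin (fun z : Y => (1 / 2 : ℝ) * ‖z - y₀‖ ^ 2 - φ z) y ∧
      (∀ x : Y, (1 / 2 : ℝ) * ‖y - y₀‖ ^ 2 - φ y ≤ (1 / 2 : ℝ) * ‖x - y₀‖ ^ 2 - φ x) ∧
      (∀ z : Y, IsLocalMin (fun w : Y => (1 / 2 : ℝ) * ‖w - y₀‖ ^ 2 - φ w) z → z = y) := by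
  set T : Y → Y := fun z => y₀ + φ' z
  have hT : ContractingWith ν T :=
    ⟨mod_cast hν, fun a b => by simpa [T, edist_add_left] using hLip a b⟩
  have hgradF (z : Y) :
      HasGradientAt (fun w : Y => (1 / 2 : ℝ) * ‖w - y₀‖ ^ 2 - φ w) (z - T z) z := by
    simpa only [T, sub_sub] using (hasGradientAt_half_norm_sub_sq y₀ z).sub (hgrad z)
  have hcrit (z : Y) : z - T z = 0 ↔ Function.IsFixedPt T z := by
    rw [sub_eq_zero, Function.IsFixedPt, eq_comm]
  set y := ContractingWith.fixedPoint T hT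
  have hmin := le_of_hasGradientAt_of_monotone hgradF (hT.2.inner_sub_self_nonneg hT.1.le)
    ((hcrit y).2 hT.fixedPoint_isFixedPt)
  exact ⟨y, .of_forall hmin, hmin, fun z hz =>
    hT.fixedPoint_unique ((hcrit z).1 ((hgradF z).eq_zero_of_isLocalMin hz))⟩

theorem stmt6 {Y : Type*} [NormedAddCommGroup Y] [InnerProductSpace ℝ Y] [CompleteSpace Y]
    (φ : Y → ℝ) (φ' : Y → Y)
    (hgrad : ∀ y : Y, HasGradientAt φ (φ' y) y) (hcont : Continuous φ')
    (hsw : ∀ (u : ℕ → Y) (y : Y),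
      Tendsto (fun n => toWeakSpace ℝ Y (u n)) atTop (nhds (toWeakSpace ℝ Y y)) →
        limsup (fun n => φ (u n)) atTop ≤ φ y)
    (ν : ℝ≥0) (hν : (ν : ℝ) < 1) (hLip : LipschitzWith ν φ')
    (y₀ : Y) :
    ∃ y : Y,
      IsLocalMin (fun z : Y => (1 / 2 : ℝ) * ‖z - y₀‖ ^ 2 - φ z) y ∧
      (∀ x : Y, (1 / 2 : ℝ) * ‖y - y₀‖ ^ 2 - φ y ≤ (1 / 2 : ℝ) * ‖x - y₀‖ ^ 2 - φ x) ∧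
      (∀ z : Y, IsLocalMin (fun w : Y => (1 / 2 : ℝ) * ‖w - y₀‖ ^ 2 - φ w) z → z = y) :=
  stmt6_general φ φ' hgrad ν hν hLip y₀
end

section
/- Let $X$ be a real Hilbert space and $J : X \to \mathbb{R}$ a $C^1$ functional whose derivative is Lipschitz with constant $L > 0$. Let $x_0 \in X$ with $J'(x_0) \ne 0$, and let $M$ be the set of global minima of the functional $x \mapsto \tfrac{1}{2}\|x - x_0\|^2 - \tfrac{1}{L} J(x)$. Then every $z \in M$ satisfies $J(z) > J(x_0)$. -/
/-!
If `J z ≤ J x₀`, comparing the objective at `z` with its value at `x₀` forces `‖z - x₀‖ = 0`,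
so `x₀` itself is a global minimum. But the quadratic term is flat at `x₀`, so the derivative of
the objective there is `-(1/L) J'(x₀) ≠ 0`, contradicting Fermat's rule.
-/

open scoped NNReal

open Filter

section ProxObjective

variable {X : Type*} [NormedAddCommGroup X]

noncomputable def proxObjective (J : X → ℝ) (c : ℝ) (x₀ x : X) : ℝ :=
  (1 / 2 : ℝ) * ‖x - x₀‖ ^ 2 - c * J x

theorem eq_of_forall_proxObjective_le {J : X → ℝ} {c : ℝ} {x₀ z : X} (hc : 0 < c)
    (hz : ∀ x, proxObjective J c x₀ z ≤ proxObjective J c x₀ x) (hle : J z ≤ J x₀) :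
    z = x₀ := by
  have hmin := hz x₀
  simp only [proxObjective, sub_self, norm_zero] at hmin
  have hsq : ‖z - x₀‖ ^ 2 ≤ 0 := by nlinarith [mul_le_mul_of_nonneg_left hle hc.le]
  simpa [sub_eq_zero] using pow_eq_zero_iff two_ne_zero |>.mp (le_antisymm hsq (sq_nonneg _))

theorem hasFDerivAt_proxObjective_self [InnerProductSpace ℝ X] {J : X → ℝ}
    {J' : X →L[ℝ] ℝ} {x₀ : X} (c : ℝ) (hJ : HasFDerivAt J J' x₀) :
    HasFDerivAt (proxObjective J c x₀) (-(c • J')) x₀ := by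
  have hsq : HasFDerivAt (fun x => ‖x - x₀‖ ^ 2) (0 : X →L[ℝ] ℝ) x₀ := by
    simpa using ((hasFDerivAt_id x₀).sub_const x₀).norm_sq
  have h := (hsq.const_mul (1 / 2 : ℝ)).sub (hJ.const_mul c)
  rwa [smul_zero, zero_sub] at h

theorem eq_zero_of_hasFDerivAt_of_forall_proxObjective_self_le [InnerProductSpace ℝ X]
    {J : X → ℝ} {J' : X →L[ℝ] ℝ} {c : ℝ} {x₀ : X} (hc : c ≠ 0) (hJ : HasFDerivAt J J' x₀)
    (hmin : ∀ x, proxObjective J c x₀ x₀ ≤ proxObjective J c x₀ x) : J' = 0 := by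
  have h := IsLocalMin.hasFDerivAt_eq_zero (Eventually.of_forall hmin)
    (hasFDerivAt_proxObjective_self c hJ)
  simpa [hc] using h

end ProxObjective

theorem stmt8_general {X : Type*} [NormedAddCommGroup X] [InnerProductSpace ℝ X] [CompleteSpace X]
    (J : X → ℝ) (J' : X → X)
    (hgrad : ∀ x : X, HasGradientAt J (J' x) x)
    (L : ℝ≥0) (hL : 0 < (L : ℝ))
    (x₀ : X) (hx₀ : J' x₀ ≠ 0) :
    ∀ z : X,
      (∀ x : X, (1 / 2 : ℝ) * ‖z - x₀‖ ^ 2 - (1 / L) * J z ≤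
        (1 / 2 : ℝ) * ‖x - x₀‖ ^ 2 - (1 / L) * J x) →
      J x₀ < J z := by
  intro z hz
  by_contra! hle
  have hc : (0 : ℝ) < 1 / L := one_div_pos.mpr hL
  obtain rfl : z = x₀ := eq_of_forall_proxObjective_le hc hz hle
  have hzero :=
    eq_zero_of_hasFDerivAt_of_forall_proxObjective_self_le hc.ne' (hgrad z).hasFDerivAt hz
  exact hx₀ (by simpa using hzero)

theorem stmt8 {X : Type*} [NormedAddCommGroup X] [InnerProductSpace ℝ X] [CompleteSpace X]
    (J : X → ℝ) (J' : X → X)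
    (hgrad : ∀ x : X, HasGradientAt J (J' x) x) (hcont : Continuous J')
    (hsw : ∀ (u : ℕ → X) (y : X),
      Tendsto (fun n => toWeakSpace ℝ X (u n)) atTop (nhds (toWeakSpace ℝ X y)) →
        limsup (fun n => J (u n)) atTop ≤ J y)
    (L : ℝ≥0) (hL : 0 < (L : ℝ)) (hLip : LipschitzWith L J')
    (x₀ : X) (hx₀ : J' x₀ ≠ 0) :
    ∀ z : X,
      (∀ x : X, (1 / 2 : ℝ) * ‖z - x₀‖ ^ 2 - (1 / L) * J z ≤
        (1 / 2 : ℝ) * ‖x - x₀‖ ^ 2 - (1 / L) * J x) →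
      J x₀ < J z :=
  stmt8_general J J' hgrad L hL x₀ hx₀
end

section
/- Let $X$ be a real Hilbert space and $J : X \to \mathbb{R}$ a sequentially weakly upper semicontinuous $C^1$ functional with $J'$ Lipschitz of constant $L$. Fix $x_0 \in X$ with $J'(x_0) \ne 0$, set $\alpha_0 = \inf_{x \in M} J(x)$ where $M$ is the set of global minima of $x \mapsto \tfrac{1}{2}\|x-x_0\|^2 - \tfrac{1}{L} J(x)$. Then for every $r \in (J(x_0), \alpha_0)$, there exists a unique $y_r \in J^{-1}(r)$ with $\|x_0 - y_r\| = \mathrm{dist}(x_0, J^{-1}(r))$. -/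
/-!
For `0 ≤ t < 1 / L` the map `y ↦ x₀ + t • J' y` is a contraction; its fixed point `γ t` satisfies
the first-order condition for minimising `‖x - x₀‖² / 2 - t * J x`, and the descent lemma upgrades
this to a strict minimum with quadratic growth `(1 - t * L) / 2 * ‖x - γ t‖²`. On the level set
`J = J (γ t)` this says that `γ t` is the unique point nearest to `x₀`.

It remains to find `t` with `J (γ t) = r`. The curve `γ` is continuous, starts at `x₀`, and
`L / 2 * ‖γ s - γ t‖² ≤ J (γ s) - J (γ t)` for `t < s`. If `J ∘ γ` stayed below `r`, then `γ t`
would converge as `t → 1 / L` to a fixed point at `t = 1 / L`, i.e. a point of `M`, where `J`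
exceeds `r`. Hence the intermediate value theorem applies.
-/

open scoped NNReal

open Filter Set Metric

theorem cauchySeq_of_sq_dist_le_sub {α : Type*} [PseudoMetricSpace α] {u : ℕ → α} {θ : ℕ → ℝ}
    {c : ℝ} (hc : 0 < c) (hθ : BddAbove (range θ))
    (h : ∀ n m, n ≤ m → c * dist (u n) (u m) ^ 2 ≤ θ m - θ n) : CauchySeq u := by
  have hmono : Monotone θ := fun n m hnm =>
    sub_nonneg.1 <| (mul_nonneg hc.le (sq_nonneg _)).trans (h n m hnm)
  have hθ_cauchy := (tendsto_atTop_ciSup hmono hθ).cauchySeq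
  rw [Metric.cauchySeq_iff'] at hθ_cauchy ⊢
  intro ε hε
  obtain ⟨N, hN⟩ := hθ_cauchy (c * ε ^ 2) (by positivity)
  refine ⟨N, fun n hn => ?_⟩
  have hgap : θ n - θ N < c * ε ^ 2 := by
    simpa [Real.dist_eq, abs_of_nonneg (sub_nonneg.2 (hmono hn))] using hN n hn
  have hsq : dist (u n) (u N) ^ 2 < ε ^ 2 := by
    rw [dist_comm]
    nlinarith [h N n hn]
  exact lt_of_pow_lt_pow_left₀ 2 hε.le hsq

theorem existsUnique_dist_eq_infDist {α : Type*} [MetricSpace α] {S : Set α} {x₀ w : α} {c : ℝ}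
    (hc : 0 < c) (hw : w ∈ S) (h : ∀ x ∈ S, dist x₀ w ^ 2 + c * dist x w ^ 2 ≤ dist x₀ x ^ 2) :
    ∃! y, y ∈ S ∧ dist x₀ y = infDist x₀ S := by
  have hle : ∀ x ∈ S, dist x₀ w ≤ dist x₀ x := fun x hx =>
    le_of_pow_le_pow_left₀ two_ne_zero dist_nonneg <| by nlinarith [h x hx, sq_nonneg (dist x w)]
  have hw_inf : dist x₀ w = infDist x₀ S :=
    le_antisymm ((le_infDist ⟨w, hw⟩).2 hle) (infDist_le_dist_of_mem hw)
  refine ⟨w, ⟨hw, hw_inf⟩, fun y ⟨hy, hy_inf⟩ => ?_⟩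
  have hdist : c * dist y w ^ 2 ≤ 0 := by
    have := h y hy
    rw [hy_inf, ← hw_inf] at this
    linarith
  exact dist_le_zero.1 <| le_of_pow_le_pow_left₀ two_ne_zero le_rfl <| by
    simpa using nonpos_of_mul_nonpos_right hdist hc

section FixedPoints

variable {X : Type*} [NormedAddCommGroup X] [InnerProductSpace ℝ X]
  {J : X → ℝ} {J' : X → X} {L : ℝ≥0}

theorem norm_grad_le_of_eq_add_smul (hLip : LipschitzWith L J') {x₀ z : X} {b : ℝ} (hb : 0 ≤ b)
    (hz : z = x₀ + b • J' z) : (1 - b * L) * ‖J' z‖ ≤ ‖J' x₀‖ := by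
  have hzx : ‖z - x₀‖ = b * ‖J' z‖ := by
    rw [hz, add_sub_cancel_left, ← hz, norm_smul, Real.norm_eq_abs, abs_of_nonneg hb]
  have := (norm_sub_norm_le (J' z) (J' x₀)).trans (hLip.norm_sub_le z x₀)
  rw [hzx] at this
  linarith

theorem norm_sub_le_of_eq_add_smul (hLip : LipschitzWith L J') {x₀ y z : X} {a b : ℝ}
    (ha : 0 ≤ a) (hy : y = x₀ + a • J' y) (hz : z = x₀ + b • J' z) :
    (1 - a * L) * ‖y - z‖ ≤ |a - b| * ‖J' z‖ := by
  have hsplit : y - z = a • (J' y - J' z) + (a - b) • J' z := by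
    rw [smul_sub, sub_smul]
    nth_rewrite 1 [hy, hz]
    abel
  have := calc ‖y - z‖ ≤ ‖a • (J' y - J' z)‖ + ‖(a - b) • J' z‖ := hsplit ▸ norm_add_le _ _
    _ ≤ a * (L * ‖y - z‖) + |a - b| * ‖J' z‖ := by
      rw [norm_smul, norm_smul, Real.norm_eq_abs, Real.norm_eq_abs, abs_of_nonneg ha]
      gcongr
      exact hLip.norm_sub_le y z
  linarith

theorem lipschitzOnWith_curve {x₀ : X} {γ : ℝ → X} (hLip : LipschitzWith L J')
    (hγ : ∀ t : ℝ, 0 ≤ t → t * L < 1 → γ t = x₀ + t • J' (γ t)) {c : ℝ} (hc : c * L < 1) :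
    LipschitzOnWith (‖J' x₀‖ / (1 - c * L) ^ 2).toNNReal γ (Icc 0 c) := by
  have hB : 0 < 1 - c * L := sub_pos.2 hc
  refine LipschitzOnWith.of_dist_le_mul fun p hp q hq => ?_
  have hmem : ∀ t ∈ Icc 0 c, 0 ≤ t ∧ 1 - c * L ≤ 1 - t * L := fun t ht =>
    ⟨ht.1, by nlinarith [ht.2, L.coe_nonneg]⟩
  obtain ⟨hp0, hpB⟩ := hmem p hp
  obtain ⟨hq0, hqB⟩ := hmem q hq
  have hdiff := norm_sub_le_of_eq_add_smul hLip hp0 (hγ p hp0 (by linarith))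
    (hγ q hq0 (by linarith))
  have hgrad := norm_grad_le_of_eq_add_smul hLip hq0 (hγ q hq0 (by linarith))
  rw [dist_eq_norm, Real.dist_eq, Real.coe_toNNReal _ (by positivity), div_mul_eq_mul_div,
    le_div_iff₀ (by positivity)]
  calc ‖γ p - γ q‖ * (1 - c * L) ^ 2
      ≤ (1 - p * L) * ‖γ p - γ q‖ * (1 - c * L) := by
        rw [sq, ← mul_assoc, mul_comm ‖_‖]; gcongr
    _ ≤ |p - q| * ‖J' (γ q)‖ * (1 - c * L) := by gcongr
    _ ≤ |p - q| * ((1 - q * L) * ‖J' (γ q)‖) := by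
        rw [mul_assoc, mul_comm ‖J' (γ q)‖]; gcongr
    _ ≤ ‖J' x₀‖ * |p - q| := by rw [mul_comm ‖J' x₀‖]; gcongr

variable [CompleteSpace X]

theorem apply_add_le_of_lipschitzWith_gradient (hgrad : ∀ x, HasGradientAt J (J' x) x)
    (hLip : LipschitzWith L J') (x v : X) :
    J (x + v) ≤ J x + inner ℝ (J' x) v + L / 2 * ‖v‖ ^ 2 := by
  set g : ℝ → ℝ := fun t => J (x + t • v) - t * inner ℝ (J' x) v - L / 2 * t ^ 2 * ‖v‖ ^ 2
  have hg : ∀ t, HasDerivAt g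
      (inner ℝ (J' (x + t • v)) v - inner ℝ (J' x) v - L * t * ‖v‖ ^ 2) t := by
    intro t
    have hline : HasDerivAt (fun t : ℝ => x + t • v) v t := by
      simpa using ((hasDerivAt_id t).smul_const v).const_add x
    have hJ : HasDerivAt (fun t : ℝ => J (x + t • v)) (inner ℝ (J' (x + t • v)) v) t := by
      simpa [Function.comp_def] using (hgrad (x + t • v)).hasFDerivAt.comp_hasDerivAt t hline
    have hsq := ((hasDerivAt_pow 2 t).const_mul ((L : ℝ) / 2)).mul_const (‖v‖ ^ 2)
    exact ((hJ.sub ((hasDerivAt_id t).mul_const (inner ℝ (J' x) v))).sub hsq).congr_deriv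
      (by ring_nf)
  have hanti : AntitoneOn g (Icc 0 1) := by
    refine antitoneOn_of_deriv_nonpos (convex_Icc 0 1)
      (fun t _ => (hg t).continuousAt.continuousWithinAt)
      (fun t _ => (hg t).differentiableAt.differentiableWithinAt) fun t ht => ?_
    rw [interior_Icc] at ht
    have hlip_step : inner ℝ (J' (x + t • v) - J' x) v ≤ L * t * ‖v‖ ^ 2 :=
      calc inner ℝ (J' (x + t • v) - J' x) v ≤ ‖J' (x + t • v) - J' x‖ * ‖v‖ :=
            real_inner_le_norm _ _
        _ ≤ L * ‖(x + t • v) - x‖ * ‖v‖ := by gcongr; exact hLip.norm_sub_le _ _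
        _ = L * t * ‖v‖ ^ 2 := by
            rw [add_sub_cancel_left, norm_smul, Real.norm_eq_abs, abs_of_pos ht.1]; ring
    rw [inner_sub_left] at hlip_step
    rw [(hg t).deriv]
    linarith
  have h01 := hanti (left_mem_Icc.2 zero_le_one) (right_mem_Icc.2 zero_le_one) zero_le_one
  simp only [g, zero_smul, add_zero, zero_mul, ne_eq, OfNat.ofNat_ne_zero, not_false_eq_true,
    zero_pow, mul_zero, sub_zero, one_smul, one_mul, one_pow, mul_one] at h01
  linarith

/-- The descent lemma at `y` plus the expansion of `‖x - x₀‖²` around `y`: by the fixed-point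
equation the first-order terms cancel. -/
theorem quadratic_growth_of_eq_add_smul (hgrad : ∀ x, HasGradientAt J (J' x) x)
    (hLip : LipschitzWith L J') {x₀ y : X} {t : ℝ} (ht : 0 ≤ t) (hy : y = x₀ + t • J' y) (x : X) :
    1 / 2 * ‖y - x₀‖ ^ 2 - t * J y + (1 - t * L) / 2 * ‖x - y‖ ^ 2 ≤
      1 / 2 * ‖x - x₀‖ ^ 2 - t * J x := by
  have hdesc := apply_add_le_of_lipschitzWith_gradient hgrad hLip y (x - y)
  rw [add_sub_cancel] at hdesc
  have hexpand : ‖x - x₀‖ ^ 2 = ‖y - x₀‖ ^ 2 + 2 * inner ℝ (y - x₀) (x - y) + ‖x - y‖ ^ 2 := by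
    rw [← norm_add_sq_real, sub_add_sub_cancel']
  have hinner : inner ℝ (y - x₀) (x - y) = t * inner ℝ (J' y) (x - y) := by
    rw [hy, add_sub_cancel_left, ← hy, real_inner_smul_left]
  nlinarith [mul_le_mul_of_nonneg_left hdesc ht]

theorem sq_norm_sub_le_of_eq_add_smul (hgrad : ∀ x, HasGradientAt J (J' x) x)
    (hLip : LipschitzWith L J') {x₀ y z : X} {a b : ℝ} (ha : 0 ≤ a) (hab : a < b) (hbL : b * L ≤ 1)
    (hy : y = x₀ + a • J' y) (hz : z = x₀ + b • J' z) :
    L / 2 * ‖z - y‖ ^ 2 ≤ J z - J y := by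
  have hgy := quadratic_growth_of_eq_add_smul hgrad hLip ha hy z
  have hgz := quadratic_growth_of_eq_add_smul hgrad hLip (ha.trans hab.le) hz y
  rw [norm_sub_rev y z] at hgz
  have hscaled : (b - a) * (L / 2 * ‖z - y‖ ^ 2) ≤ (b - a) * (J z - J y) := by
    nlinarith [sq_nonneg ‖z - y‖]
  exact le_of_mul_le_mul_left hscaled (sub_pos.2 hab)

theorem exists_curve_eq_add_smul (hLip : LipschitzWith L J') (x₀ : X) :
    ∃ γ : ℝ → X, ∀ t : ℝ, 0 ≤ t → t * L < 1 → γ t = x₀ + t • J' (γ t) := by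
  have : Nonempty X := ⟨x₀⟩
  have hfix : ∀ t : ℝ, ∃ y : X, 0 ≤ t → t * L < 1 → y = x₀ + t • J' y := by
    intro t
    by_cases ht : 0 ≤ t ∧ t * L < 1
    · have hcontr : ContractingWith (t.toNNReal * L) (fun y => x₀ + t • J' y) := by
        refine ⟨by rw [← NNReal.coe_lt_coe]; simpa [ht.1] using ht.2,
          LipschitzWith.of_dist_le_mul fun p q => ?_⟩
        rw [dist_add_left, dist_smul₀, Real.norm_eq_abs, abs_of_nonneg ht.1, NNReal.coe_mul,
          Real.coe_toNNReal _ ht.1, mul_assoc]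
        exact mul_le_mul_of_nonneg_left (hLip.dist_le_mul p q) ht.1
      exact ⟨_, fun _ _ => hcontr.fixedPoint_isFixedPt.symm⟩
    · exact ⟨x₀, fun h0 h1 => (ht ⟨h0, h1⟩).elim⟩
  choose γ hγ using hfix
  exact ⟨γ, hγ⟩

theorem exists_eq_add_one_div_smul_of_le {x₀ : X} {γ : ℝ → X}
    (hgrad : ∀ x, HasGradientAt J (J' x) x) (hLip : LipschitzWith L J') (hL : 0 < (L : ℝ))
    (hγ : ∀ t : ℝ, 0 ≤ t → t * L < 1 → γ t = x₀ + t • J' (γ t)) {r : ℝ}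
    (hr : ∀ t : ℝ, 0 ≤ t → t * L < 1 → J (γ t) ≤ r) :
    ∃ y, y = x₀ + (1 / L : ℝ) • J' y ∧ J y ≤ r := by
  obtain ⟨s, hs_mono, hs_mem, hs_lim⟩ := exists_seq_strictMono_tendsto' (one_div_pos.2 hL)
  have hs : ∀ n, 0 ≤ s n ∧ s n * L < 1 := fun n =>
    ⟨(hs_mem n).1.le, (lt_div_iff₀ hL).1 (hs_mem n).2⟩
  have hcauchy : CauchySeq (γ ∘ s) := by
    refine cauchySeq_of_sq_dist_le_sub (half_pos hL) (θ := fun n => J (γ (s n)))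
      ⟨r, by rintro _ ⟨n, rfl⟩; exact hr _ (hs n).1 (hs n).2⟩ fun n m hnm => ?_
    rcases hnm.eq_or_lt with rfl | hlt
    · simp
    rw [dist_comm, dist_eq_norm]
    exact sq_norm_sub_le_of_eq_add_smul hgrad hLip (hs n).1 (hs_mono hlt) (hs m).2.le
      (hγ _ (hs n).1 (hs n).2) (hγ _ (hs m).1 (hs m).2)
  obtain ⟨y, hy⟩ := cauchySeq_tendsto_of_complete hcauchy
  have hJ : Continuous J := continuous_iff_continuousAt.2 fun x => (hgrad x).continuousAt
  refine ⟨y, tendsto_nhds_unique hy ?_, le_of_tendsto ((hJ.tendsto y).comp hy)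
    (Eventually.of_forall fun n => hr _ (hs n).1 (hs n).2)⟩
  exact (tendsto_const_nhds.add (hs_lim.smul ((hLip.continuous.tendsto y).comp hy))).congr
    fun n => (hγ _ (hs n).1 (hs n).2).symm

theorem existsUnique_norm_sub_eq_infDist (hgrad : ∀ x, HasGradientAt J (J' x) x)
    (hLip : LipschitzWith L J') {x₀ w : X} {t : ℝ} (ht : 0 ≤ t) (htL : t * L < 1)
    (hw : w = x₀ + t • J' w) :
    ∃! y, J y = J w ∧ ‖x₀ - y‖ = infDist x₀ {x | J x = J w} := by
  simp only [← dist_eq_norm]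
  refine existsUnique_dist_eq_infDist (sub_pos.2 htL) rfl fun x hx => ?_
  have := quadratic_growth_of_eq_add_smul hgrad hLip ht hw x
  rw [show J x = J w from hx] at this
  simp only [dist_eq_norm, norm_sub_rev x₀]
  linarith

end FixedPoints

theorem stmt10_general {X : Type*} [NormedAddCommGroup X] [InnerProductSpace ℝ X] [CompleteSpace X]
    (J : X → ℝ) (J' : X → X)
    (hgrad : ∀ x : X, HasGradientAt J (J' x) x)
    (L : ℝ≥0) (hL : 0 < (L : ℝ)) (hLip : LipschitzWith L J')
    (x₀ : X)
    (M : Set X)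
    (hM : M = {z : X | ∀ x : X, (1 / 2 : ℝ) * ‖z - x₀‖ ^ 2 - (1 / L) * J z ≤
      (1 / 2 : ℝ) * ‖x - x₀‖ ^ 2 - (1 / L) * J x})
    (r : ℝ) (hr₁ : J x₀ < r) (hr₂ : (r : EReal) < ⨅ x ∈ M, (J x : EReal)) :
    ∃! y : X, J y = r ∧ ‖x₀ - y‖ = Metric.infDist x₀ {x : X | J x = r} := by
  obtain ⟨γ, hγ⟩ := exists_curve_eq_add_smul hLip x₀
  obtain ⟨c, hc0, hcL, hrc⟩ : ∃ c : ℝ, 0 ≤ c ∧ c * L < 1 ∧ r ≤ J (γ c) := by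
    by_contra! hlt
    obtain ⟨y, hy, hJy⟩ :=
      exists_eq_add_one_div_smul_of_le hgrad hLip hL hγ fun t ht htL => (hlt t ht htL).le
    have hyM : y ∈ M := by
      rw [hM]
      intro x
      have := quadratic_growth_of_eq_add_smul hgrad hLip (by positivity) hy x
      rwa [one_div_mul_cancel hL.ne', sub_self, zero_div, zero_mul, add_zero] at this
    have hrJy : (r : EReal) < J y := hr₂.trans_le (iInf₂_le y hyM)
    exact (EReal.coe_lt_coe_iff.1 hrJy).not_ge hJy
  have hγ0 : γ 0 = x₀ := by simpa using hγ 0 le_rfl (by simp)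
  have hJ : Continuous J := continuous_iff_continuousAt.2 fun x => (hgrad x).continuousAt
  obtain ⟨t, ⟨ht0, htc⟩, htr⟩ := intermediate_value_Icc hc0
    (hJ.comp_continuousOn (lipschitzOnWith_curve hLip hγ hcL).continuousOn)
    (show r ∈ Icc (J (γ 0)) (J (γ c)) from ⟨hγ0 ▸ hr₁.le, hrc⟩)
  have htL : t * L < 1 := (mul_le_mul_of_nonneg_right htc L.coe_nonneg).trans_lt hcL
  rw [← show J (γ t) = r from htr]
  exact existsUnique_norm_sub_eq_infDist hgrad hLip ht0 htL (hγ t ht0 htL)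

theorem stmt10 {X : Type*} [NormedAddCommGroup X] [InnerProductSpace ℝ X] [CompleteSpace X]
    (J : X → ℝ) (J' : X → X)
    (hgrad : ∀ x : X, HasGradientAt J (J' x) x) (hcont : Continuous J')
    (hsw : ∀ (u : ℕ → X) (y : X),
      Tendsto (fun n => toWeakSpace ℝ X (u n)) atTop (nhds (toWeakSpace ℝ X y)) →
        limsup (fun n => J (u n)) atTop ≤ J y)
    (L : ℝ≥0) (hL : 0 < (L : ℝ)) (hLip : LipschitzWith L J')
    (x₀ : X) (hx₀ : J' x₀ ≠ 0)
    (M : Set X)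
    (hM : M = {z : X | ∀ x : X, (1 / 2 : ℝ) * ‖z - x₀‖ ^ 2 - (1 / L) * J z ≤
      (1 / 2 : ℝ) * ‖x - x₀‖ ^ 2 - (1 / L) * J x})
    (r : ℝ) (hr₁ : J x₀ < r) (hr₂ : (r : EReal) < ⨅ x ∈ M, (J x : EReal)) :
    ∃! y : X, J y = r ∧ ‖x₀ - y‖ = Metric.infDist x₀ {x : X | J x = r} :=
  stmt10_general J J' hgrad L hL hLip x₀ M hM r hr₁ hr₂
end

section
/- Let $X$ be a real Hilbert space, $J : X \to \mathbb{R}$ a $C^1$ functional with $J'$ Lipschitz of constant $L$, and $x_0 \in X$. For $\gamma > L$, let $x_\gamma$ denote the unique global minimum of $x \mapsto \tfrac{\gamma}{2}\|x - x_0\|^2 - J(x)$, and let $z$ be any global minimum of $x \mapsto \tfrac{L}{2}\|x - x_0\|^2 - J(x)$. Then $\|x_\gamma - x_0\| \le \|z - x_0\|$. -/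
open scoped NNReal ENNReal

theorem stmt12 {X : Type*} [NormedAddCommGroup X] [InnerProductSpace ℝ X] [CompleteSpace X]
    (J : X → ℝ) (J' : X → X)
    (hgrad : ∀ x : X, HasGradientAt J (J' x) x) (hcont : Continuous J')
    (L : ℝ≥0) (hLip : LipschitzWith L J')
    (x₀ : X) (γ : ℝ) (hγ : (L : ℝ) < γ)
    (xγ : X)
    (hxγ : ∀ x : X, γ / 2 * ‖xγ - x₀‖ ^ 2 - J xγ ≤ γ / 2 * ‖x - x₀‖ ^ 2 - J x)
    (z : X)
    (hz : ∀ x : X, (L : ℝ) / 2 * ‖z - x₀‖ ^ 2 - J z ≤ (L : ℝ) / 2 * ‖x - x₀‖ ^ 2 - J x) :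
    ‖xγ - x₀‖ ≤ ‖z - x₀‖ := by
  have h1 := hxγ z
  have h2 := hz xγ
  have hsq : ‖xγ - x₀‖ ^ 2 ≤ ‖z - x₀‖ ^ 2 := by nlinarith
  exact (pow_le_pow_iff_left₀ (norm_nonneg _) (norm_nonneg _) two_ne_zero).mp hsq
end

section
/- Let $X$ be a real Hilbert space, $J : X \to \mathbb{R}$, $x_0 \in X$, $r > 0$, $\hat\lambda > 0$. Suppose $\hat{x} \in X$ satisfies $\|\hat{x} - x_0\| = r$ and $-\tfrac{1}{\hat\lambda} J(\hat{x}) = \inf_{x \in X}\left( \tfrac{1}{2}(\|x - x_0\|^2 - r^2) - \tfrac{1}{\hat\lambda} J(x) \right)$. Then every global maximum of $J$ restricted to the sphere $S(x_0, r)$ is a global minimum on all of $X$ of the functional $x \mapsto \tfrac{1}{2}\|x - x_0\|^2 - \tfrac{1}{\hat\lambda} J(x)$. -/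
theorem stmt14 {X : Type*} [NormedAddCommGroup X] [InnerProductSpace ℝ X]
    (J : X → ℝ) (x₀ : X) (r : ℝ) (hr : 0 < r) (lam : ℝ) (hlam : 0 < lam)
    (xhat : X) (hx : ‖xhat - x₀‖ = r)
    (hinf : ∀ x : X, -(1 / lam) * J xhat ≤
      (1 / 2 : ℝ) * (‖x - x₀‖ ^ 2 - r ^ 2) - (1 / lam) * J x) :
    ∀ y : X, ‖y - x₀‖ = r → (∀ x : X, ‖x - x₀‖ = r → J x ≤ J y) →
      ∀ x : X, (1 / 2 : ℝ) * ‖y - x₀‖ ^ 2 - (1 / lam) * J y ≤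
        (1 / 2 : ℝ) * ‖x - x₀‖ ^ 2 - (1 / lam) * J x := by
  intro y hy hmax x
  have h1 := hmax xhat hx
  have h2 := hinf x
  have hl : 0 < 1 / lam := by positivity
  rw [hy]
  nlinarith [mul_le_mul_of_nonneg_left h1 hl.le]
end

section
/- Let $X$ be a real Hilbert space and $J : X \to \mathbb{R}$ be $C^1$, sequentially weakly upper semicontinuous, with $J'$ Lipschitz of constant $L$ and $J'(u) \ne 0$ for all $u \in X$. Let $M$ be the set of global minima of $u \mapsto \tfrac{1}{2}\|u\|^2 - \tfrac{1}{L} J(u)$ and set $\delta_0 = \inf_{u \in M}\|u\|^2$. Then $\delta_0 > 0$, and for every $r \in (0, \delta_0)$, the restriction of $J$ to the sphere $\{u : \|u\|^2 = r\}$ attains its supremum at exactly one point. -/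
open scoped NNReal RealInnerProductSpace
open Filter Topology Metric InnerProductSpace Set

/-!
Put `g u = (L/2)‖u‖² - J u`, which is `L` times the functional whose minimisers form `M`. Since
`J'` is `L`-Lipschitz, the gradient `L u - J' u` of `g` is monotone, so `g` is convex. `M` is
closed, and `0 ∉ M` because `∇g 0 = -J' 0 ≠ 0`; hence `δ₀ > 0`.

For `0 < r < δ₀`, `g` attains its minimum on the closed ball of radius `√r` (bounded sequences
have weakly convergent subsequences, `‖·‖` is weakly lower and `J` weakly upper semicontinuous).
A minimiser inside the open ball would be a local, hence by convexity a global, minimum of `g`,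
i.e. a point of `M` of norm `< √δ₀`. So every minimiser lies on the sphere, where minimising `g`
means maximising `J`; two different ones would have their midpoint, again a minimiser by
convexity of `g`, inside the open ball by strict convexity of the ball.
-/

section ConvexMinimization

variable {E : Type*} [NormedAddCommGroup E] [NormedSpace ℝ E] {g : E → ℝ} {s : Set E} {y y' : E}

theorem ConvexOn.notMem_interior_of_isMinOn (hg : ConvexOn ℝ univ g)
    (hs : ∀ z, (∀ x, g z ≤ g x) → z ∉ interior s) (hy : IsMinOn g s y) : y ∉ interior s :=
  fun hys => hs y (IsMinOn.of_isLocalMin_of_convex_univ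
    (hy.isLocalMin (mem_interior_iff_mem_nhds.mp hys)) hg) hys

theorem ConvexOn.eq_of_isMinOn_of_strictConvex (hg : ConvexOn ℝ univ g) (hsc : StrictConvex ℝ s)
    (hs : ∀ z, (∀ x, g z ≤ g x) → z ∉ interior s) (hy : y ∈ s) (hy' : y' ∈ s)
    (hmin : IsMinOn g s y) (hmin' : IsMinOn g s y') : y = y' := by
  by_contra hne
  set m : E := (1 / 2 : ℝ) • y + (1 / 2 : ℝ) • y'
  have hm : m ∈ interior s := hsc hy hy' hne (by norm_num) (by norm_num) (by norm_num)
  have hmin_m : IsMinOn g s m := fun x hx => by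
    have hmid := hg.2 (mem_univ y) (mem_univ y') one_half_pos.le one_half_pos.le (add_halves 1)
    have hyx := isMinOn_iff.mp hmin x hx
    have hy'x := isMinOn_iff.mp hmin' x hx
    simp only [smul_eq_mul] at hmid
    show g m ≤ g x
    linarith
  exact hg.notMem_interior_of_isMinOn hs hmin_m hm

theorem ConvexOn.exists_norm_eq_isMinOn_closedBall [StrictConvexSpace ℝ E] {ρ : ℝ}
    (hg : ConvexOn ℝ univ g) (hρ : 0 < ρ) (hfar : ∀ z, (∀ x, g z ≤ g x) → ρ ≤ ‖z‖)
    (hex : ∃ y ∈ closedBall (0 : E) ρ, IsMinOn g (closedBall 0 ρ) y) :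
    ∃ y, ‖y‖ = ρ ∧ IsMinOn g (closedBall 0 ρ) y ∧ ∀ y', ‖y'‖ = ρ → g y' ≤ g y → y' = y := by
  have hint : ∀ z, (∀ x, g z ≤ g x) → z ∉ interior (closedBall 0 ρ) := fun z hz hzρ => by
    rw [interior_closedBall _ hρ.ne', mem_ball_zero_iff] at hzρ
    exact hzρ.not_ge (hfar z hz)
  obtain ⟨y, hyρ, hymin⟩ := hex
  have hy : ‖y‖ = ρ := by
    have := hg.notMem_interior_of_isMinOn hint hymin
    rw [interior_closedBall _ hρ.ne', mem_ball_zero_iff, not_lt] at this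
    exact le_antisymm (mem_closedBall_zero_iff.mp hyρ) this
  refine ⟨y, hy, hymin, fun y' hy' hle => ?_⟩
  exact hg.eq_of_isMinOn_of_strictConvex (strictConvex_closedBall ℝ 0 ρ) hint
    (mem_closedBall_zero_iff.mpr hy'.le) hyρ (fun x hx => hle.trans (hymin hx)) hymin

end ConvexMinimization

theorem Continuous.isClosed_setOf_forall_le {α : Type*} [TopologicalSpace α] {g : α → ℝ}
    (hg : Continuous g) :
    IsClosed {z | ∀ x, g z ≤ g x} := by
  rw [ofPred_forall]
  exact isClosed_iInter fun x => isClosed_le hg continuous_const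

theorem zero_lt_iInf_norm_sq_of_isClosed {E : Type*} [SeminormedAddCommGroup E] {M : Set E}
    (hM : IsClosed M) (h0 : (0 : E) ∉ M) :
    (0 : EReal) < ⨅ z ∈ M, ((‖z‖ ^ 2 : ℝ) : EReal) := by
  obtain ⟨ε, hε, hball⟩ := Metric.isOpen_iff.mp hM.isOpen_compl 0 h0
  have hle : ((ε ^ 2 : ℝ) : EReal) ≤ ⨅ z ∈ M, ((‖z‖ ^ 2 : ℝ) : EReal) := by
    refine le_iInf₂ fun z hz => EReal.coe_le_coe_iff.mpr ?_
    have : ε ≤ ‖z‖ := by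
      by_contra! h
      exact hball (mem_ball_zero_iff.mpr h) hz
    gcongr
  exact lt_of_lt_of_le (EReal.coe_lt_coe_iff.mpr (by positivity)) hle

section Gradient

variable {X : Type*} [NormedAddCommGroup X] [InnerProductSpace ℝ X]

theorem inner_sub_smul_sub_nonneg_of_lipschitzWith {F : X → X} {L : ℝ≥0}
    (hF : LipschitzWith L F) (x y : X) :
    0 ≤ ⟪((L : ℝ) • x - F x) - ((L : ℝ) • y - F y), x - y⟫ := by
  have hxy : ((L : ℝ) • x - F x) - ((L : ℝ) • y - F y) = (L : ℝ) • (x - y) - (F x - F y) := by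
    rw [smul_sub]; abel
  have hF' : ‖F x - F y‖ ≤ L * ‖x - y‖ := by
    simpa only [dist_eq_norm] using hF.dist_le_mul x y
  rw [hxy, inner_sub_left, real_inner_smul_left, real_inner_self_eq_norm_sq]
  nlinarith [real_inner_le_norm (F x - F y) (x - y), norm_nonneg (x - y)]

theorem convexOn_univ_of_add_inner_sub_le {f : X → ℝ} {f' : X → X}
    (hf : ∀ x y, f x + ⟪f' x, y - x⟫ ≤ f y) : ConvexOn ℝ univ f := by
  refine ⟨convex_univ, fun x _ y _ a b ha hb hab => ?_⟩
  set m := a • x + b • y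
  have hsum : a • (x - m) + b • (y - m) = 0 := by
    have : a • (x - m) + b • (y - m) = m - (a + b) • m := by simp only [m]; module
    rw [this, hab, one_smul, sub_self]
  have key := congrArg (⟪f' m, ·⟫) hsum
  simp only [inner_add_right, real_inner_smul_right, inner_zero_right] at key
  have hx := hf m x
  have hy := hf m y
  have hm : f m = a * f m + b * f m := by rw [← add_mul, hab, one_mul]
  simp only [smul_eq_mul]
  nlinarith [mul_le_mul_of_nonneg_left hx ha, mul_le_mul_of_nonneg_left hy hb]

theorem bddBelow_image_closedBall_of_add_inner_sub_le {f : X → ℝ} {x₀ v : X}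
    (hf : ∀ y, f x₀ + ⟪v, y - x₀⟫ ≤ f y) (ρ : ℝ) : BddBelow (f '' closedBall x₀ ρ) := by
  refine ⟨f x₀ - ‖v‖ * ρ, ?_⟩
  rintro _ ⟨y, hy, rfl⟩
  have hvy : -(‖v‖ * ρ) ≤ ⟪v, y - x₀⟫ := by
    have h1 := neg_le_of_abs_le (abs_real_inner_le_norm v (y - x₀))
    have h2 : ‖v‖ * ‖y - x₀‖ ≤ ‖v‖ * ρ :=
      mul_le_mul_of_nonneg_left (by rwa [← dist_eq_norm]) (norm_nonneg v)
    linarith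
  linarith [hf y]

variable [CompleteSpace X]

theorem HasGradientAt.half_mul_norm_sq_sub {J : X → ℝ} {j x : X} (c : ℝ)
    (hJ : HasGradientAt J j x) :
    HasGradientAt (fun y => c / 2 * ‖y‖ ^ 2 - J y) (c • x - j) x := by
  rw [hasGradientAt_iff_hasFDerivAt] at hJ ⊢
  refine (((hasStrictFDerivAt_norm_sq x).hasFDerivAt.const_mul (c / 2)).sub hJ).congr_fderiv ?_
  ext v
  simp
  ring

theorem IsLocalMin.hasGradientAt_eq_zero {f : X → ℝ} {f' z : X} (hmin : IsLocalMin f z)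
    (hf : HasGradientAt f f' z) : f' = 0 := by
  simpa using hmin.hasFDerivAt_eq_zero hf.hasFDerivAt

theorem add_inner_sub_le_of_monotone_gradient {f : X → ℝ} {f' : X → X}
    (hf : ∀ x, HasGradientAt f (f' x) x) (hmono : ∀ x y, 0 ≤ ⟪f' x - f' y, x - y⟫) (x y : X) :
    f x + ⟪f' x, y - x⟫ ≤ f y := by
  set v := y - x
  have hderiv : ∀ t : ℝ, HasDerivAt (fun t : ℝ => f (x + t • v)) ⟪f' (x + t • v), v⟫ t := by
    intro t
    have hline : HasDerivAt (fun t : ℝ => x + t • v) v t := by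
      simpa using ((hasDerivAt_id t).smul_const v).const_add x
    have := (hf (x + t • v)).hasFDerivAt.comp_hasDerivAt t hline
    rwa [toDual_apply_apply] at this
  have hslope : ∀ t ∈ interior (Ici (0 : ℝ)),
      ⟪f' x, v⟫ ≤ deriv (fun t : ℝ => f (x + t • v)) t := by
    intro t ht
    rw [interior_Ici, mem_Ioi] at ht
    have h := hmono (x + t • v) x
    rw [add_sub_cancel_left, inner_smul_right, inner_sub_left] at h
    rw [(hderiv t).deriv]
    nlinarith
  have := (convex_Ici 0).mul_sub_le_image_sub_of_le_deriv
    (fun t _ => (hderiv t).continuousAt.continuousWithinAt)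
    (fun t _ => (hderiv t).differentiableAt.differentiableWithinAt) hslope
    0 self_mem_Ici 1 (mem_Ici.mpr zero_le_one) zero_le_one
  simp only [zero_smul, add_zero, one_smul, sub_zero, mul_one, v, add_sub_cancel] at this
  linarith

end Gradient

section WeakCompactness

variable {X : Type*} [NormedAddCommGroup X] [InnerProductSpace ℝ X]

theorem norm_le_of_forall_inner_tendsto {ι : Type*} {l : Filter ι} [l.NeBot] {u : ι → X} {z : X}
    {s : ℝ} (hu : Tendsto (fun i => ⟪u i, z⟫) l (𝓝 ⟪z, z⟫)) (hs : Tendsto (‖u ·‖) l (𝓝 s)) :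
    ‖z‖ ≤ s := by
  have h : ‖z‖ ^ 2 ≤ s * ‖z‖ := by
    rw [← real_inner_self_eq_norm_sq]
    exact le_of_tendsto_of_tendsto' hu (hs.mul_const _) fun i => real_inner_le_norm _ _
  rcases (norm_nonneg z).eq_or_lt with hz | hz
  · rw [← hz]; exact ge_of_tendsto' hs fun i => norm_nonneg _
  · nlinarith

variable [CompleteSpace X]

theorem tendsto_toWeakSpace_of_forall_inner_tendsto {ι : Type*} {l : Filter ι}
    {u : ι → X} {z : X} (hu : ∀ x, Tendsto (fun i => ⟪u i, x⟫) l (𝓝 ⟪z, x⟫)) :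
    Tendsto (fun i => toWeakSpace ℝ X (u i)) l (𝓝 (toWeakSpace ℝ X z)) := by
  have hinj : Function.Injective (topDualPairing ℝ X).flip :=
    separatingDual_iff_injective.mp inferInstance
  refine (WeakBilin.tendsto_iff_forall_eval_tendsto _ hinj).mpr fun f => ?_
  change Tendsto (fun i => f (u i)) l (𝓝 (f z))
  have key : ∀ x, f x = ⟪x, (toDual ℝ X).symm f⟫ := fun x => by
    rw [real_inner_comm, toDual_symm_apply]
  simpa only [key] using hu ((toDual ℝ X).symm f)

/-- The closed span `K` of the sequence is separable, so the sequential Banach–Alaoglu theorem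
applies in `K`; orthogonal projection onto `K` carries the convergence to all of `X`. -/
theorem exists_strictMono_forall_inner_tendsto {u : ℕ → X} {C : ℝ} (hu : ∀ n, ‖u n‖ ≤ C) :
    ∃ z : X, ∃ φ : ℕ → ℕ, StrictMono φ ∧
      ∀ x, Tendsto (fun k => ⟪u (φ k), x⟫) atTop (𝓝 ⟪z, x⟫) := by
  set K := (Submodule.span ℝ (Set.range u)).topologicalClosure
  have huK : ∀ n, u n ∈ K := fun n =>
    Submodule.le_topologicalClosure _ (Submodule.subset_span ⟨n, rfl⟩)
  have : CompleteSpace K := (Submodule.isClosed_topologicalClosure _).completeSpace_coe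
  have : TopologicalSpace.SeparableSpace K := by
    have := ((Set.countable_range u).isSeparable.span (R := ℝ)).closure
    rw [← Submodule.topologicalClosure_coe] at this
    exact this.separableSpace
  let w : ℕ → WeakDual ℝ K := fun n => StrongDual.toWeakDual (toDual ℝ K ⟨u n, huK n⟩)
  have hw : ∀ n, w n ∈ WeakDual.toStrongDual ⁻¹' closedBall 0 C := fun n => by
    have : ‖toDual ℝ K ⟨u n, huK n⟩‖ ≤ C := by simpa using hu n
    exact (dist_zero_right _).trans_le this
  obtain ⟨f, -, φ, hφ, hf⟩ := WeakDual.isSeqCompact_closedBall ℝ K 0 C hw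
  refine ⟨(toDual ℝ K).symm (WeakDual.toStrongDual f), φ, hφ, fun x => ?_⟩
  have := ((WeakDual.eval_continuous (K.orthogonalProjectionOnto x)).tendsto f).comp hf
  rw [← Submodule.inner_orthogonalProjectionOnto_eq_of_mem_left, toDual_symm_apply]
  simpa [w, Function.comp_def] using this

theorem exists_isMinOn_closedBall_half_mul_norm_sq_sub {J : X → ℝ}
    (hJ : ∀ (u : ℕ → X) (y : X),
      Tendsto (fun n => toWeakSpace ℝ X (u n)) atTop (𝓝 (toWeakSpace ℝ X y)) →
        limsup (fun n => J (u n)) atTop ≤ J y)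
    {c ρ : ℝ} (hc : 0 ≤ c) (hρ : 0 ≤ ρ)
    (hbdd : BddBelow ((fun x => c / 2 * ‖x‖ ^ 2 - J x) '' closedBall 0 ρ)) :
    ∃ y ∈ closedBall (0 : X) ρ, IsMinOn (fun x => c / 2 * ‖x‖ ^ 2 - J x) (closedBall 0 ρ) y := by
  set g : X → ℝ := fun x => c / 2 * ‖x‖ ^ 2 - J x
  obtain ⟨a, -, ha, hamem⟩ := exists_seq_tendsto_sInf
    ⟨_, mem_image_of_mem g (mem_closedBall_self hρ)⟩ hbdd
  set m := sInf (g '' closedBall 0 ρ)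
  choose u hu hgu using hamem
  obtain ⟨z, φ, hφ, hz⟩ :=
    exists_strictMono_forall_inner_tendsto fun n => mem_closedBall_zero_iff.mp (hu n)
  -- the norm is only weakly lower semicontinuous, so make the norms converge as well
  have hnorm_mem : ∀ k, ‖u (φ k)‖ ∈ Icc 0 ρ :=
    fun k => ⟨norm_nonneg _, mem_closedBall_zero_iff.mp (hu (φ k))⟩
  obtain ⟨s, hs, ψ, hψ, hnorm⟩ := isCompact_Icc.isSeqCompact hnorm_mem
  set v := fun k => u (φ (ψ k))
  have hv : ∀ x, Tendsto (fun k => ⟪v k, x⟫) atTop (𝓝 ⟪z, x⟫) :=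
    fun x => (hz x).comp hψ.tendsto_atTop
  have hzs : ‖z‖ ≤ s := norm_le_of_forall_inner_tendsto (hv z) hnorm
  have hgv : Tendsto (fun k => g (v k)) atTop (𝓝 m) := by
    simpa only [v, hgu, Function.comp_def] using ha.comp (hφ.comp hψ).tendsto_atTop
  have hJv : Tendsto (fun k => J (v k)) atTop (𝓝 (c / 2 * s ^ 2 - m)) :=
    (((hnorm.pow 2).const_mul (c / 2)).sub hgv).congr fun k => by simp [g, v]
  have hJz := hJ v z (tendsto_toWeakSpace_of_forall_inner_tendsto hv)
  rw [hJv.limsup_eq] at hJz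
  refine ⟨z, mem_closedBall_zero_iff.mpr (hzs.trans hs.2), fun x hx => ?_⟩
  have hgz : g z ≤ m := by
    have : c / 2 * ‖z‖ ^ 2 ≤ c / 2 * s ^ 2 := by gcongr
    simp only [g]
    linarith
  exact hgz.trans (csInf_le hbdd ⟨x, hx, rfl⟩)

end WeakCompactness

theorem half_mul_sub_one_div_mul_le_iff {L a b a' b' : ℝ} (hL : 0 < L) :
    1 / 2 * a - 1 / L * b ≤ 1 / 2 * a' - 1 / L * b' ↔ L / 2 * a - b ≤ L / 2 * a' - b' := by
  rw [← mul_le_mul_iff_right₀ hL]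
  field_simp

theorem stmt17_general {X : Type*} [NormedAddCommGroup X] [InnerProductSpace ℝ X] [CompleteSpace X]
    (J : X → ℝ) (J' : X → X)
    (hgrad : ∀ x : X, HasGradientAt J (J' x) x)
    (hsw : ∀ (u : ℕ → X) (y : X),
      Tendsto (fun n => toWeakSpace ℝ X (u n)) atTop (nhds (toWeakSpace ℝ X y)) →
        limsup (fun n => J (u n)) atTop ≤ J y)
    (L : ℝ≥0) (hL : 0 < (L : ℝ)) (hLip : LipschitzWith L J')
    (hJ' : ∀ u : X, J' u ≠ 0)
    (M : Set X)
    (hM : M = {z : X | ∀ x : X, (1 / 2 : ℝ) * ‖z‖ ^ 2 - (1 / L) * J z ≤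
      (1 / 2 : ℝ) * ‖x‖ ^ 2 - (1 / L) * J x}) :
    (0 : EReal) < ⨅ z ∈ M, ((‖z‖ ^ 2 : ℝ) : EReal) ∧
    ∀ r : ℝ, 0 < r → ((r : EReal) < ⨅ z ∈ M, ((‖z‖ ^ 2 : ℝ) : EReal)) →
      ∃! y : X, ‖y‖ ^ 2 = r ∧ ∀ x : X, ‖x‖ ^ 2 = r → J x ≤ J y := by
  set g : X → ℝ := fun x => (L : ℝ) / 2 * ‖x‖ ^ 2 - J x
  have hgrad_g : ∀ x, HasGradientAt g ((L : ℝ) • x - J' x) x :=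
    fun x => (hgrad x).half_mul_norm_sq_sub L
  have htangent := add_inner_sub_le_of_monotone_gradient hgrad_g
    (inner_sub_smul_sub_nonneg_of_lipschitzWith hLip)
  have hconv : ConvexOn ℝ univ g := convexOn_univ_of_add_inner_sub_le htangent
  have hM' : M = {z | ∀ x, g z ≤ g x} := by
    ext z
    simp only [hM, mem_ofPred_eq, half_mul_sub_one_div_mul_le_iff hL, g]
  have h0 : (0 : X) ∉ M := fun h => hJ' 0 <| by
    rw [hM'] at h
    simpa using IsLocalMin.hasGradientAt_eq_zero (Eventually.of_forall h) (hgrad_g 0)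
  have hMclosed : IsClosed M := hM' ▸ Continuous.isClosed_setOf_forall_le
    (continuous_iff_continuousAt.mpr fun x => (hgrad_g x).differentiableAt.continuousAt)
  refine ⟨zero_lt_iInf_norm_sq_of_isClosed hMclosed h0, fun r hr hrM => ?_⟩
  have hsph : ∀ x : X, ‖x‖ ^ 2 = r ↔ ‖x‖ = √r := fun x => by
    rw [eq_comm (a := ‖x‖), Real.sqrt_eq_iff_eq_sq hr.le (norm_nonneg x), eq_comm]
  have hfar : ∀ z, (∀ x, g z ≤ g x) → √r ≤ ‖z‖ := fun z hz => by
    have : r < ‖z‖ ^ 2 := EReal.coe_lt_coe_iff.mp (hrM.trans_le (iInf₂_le z (hM' ▸ hz)))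
    exact (Real.sqrt_le_sqrt this.le).trans_eq (Real.sqrt_sq (norm_nonneg z))
  obtain ⟨y, hy, hymin, huniq⟩ := hconv.exists_norm_eq_isMinOn_closedBall (Real.sqrt_pos.mpr hr)
    hfar (exists_isMinOn_closedBall_half_mul_norm_sq_sub hsw L.coe_nonneg (Real.sqrt_nonneg r)
      (bddBelow_image_closedBall_of_add_inner_sub_le (htangent 0) _))
  have hcompare : ∀ x x' : X, ‖x‖ = ‖x'‖ → (g x ≤ g x' ↔ J x' ≤ J x) := fun x x' h => by
    simp only [g, h, sub_le_sub_iff_left]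
  refine ⟨y, ⟨(hsph y).mpr hy, fun x hx => ?_⟩, fun y' ⟨hy', hy'max⟩ => ?_⟩
  · rw [hsph] at hx
    exact (hcompare y x (hy.trans hx.symm)).mp (hymin (mem_closedBall_zero_iff.mpr hx.le))
  · rw [hsph] at hy'
    exact huniq y' hy' ((hcompare y' y (hy'.trans hy.symm)).mpr (hy'max y ((hsph y).mpr hy)))

theorem stmt17 {X : Type*} [NormedAddCommGroup X] [InnerProductSpace ℝ X] [CompleteSpace X]
    (J : X → ℝ) (J' : X → X)
    (hgrad : ∀ x : X, HasGradientAt J (J' x) x) (hcont : Continuous J')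
    (hsw : ∀ (u : ℕ → X) (y : X),
      Tendsto (fun n => toWeakSpace ℝ X (u n)) atTop (nhds (toWeakSpace ℝ X y)) →
        limsup (fun n => J (u n)) atTop ≤ J y)
    (L : ℝ≥0) (hL : 0 < (L : ℝ)) (hLip : LipschitzWith L J')
    (hJ' : ∀ u : X, J' u ≠ 0)
    (M : Set X)
    (hM : M = {z : X | ∀ x : X, (1 / 2 : ℝ) * ‖z‖ ^ 2 - (1 / L) * J z ≤
      (1 / 2 : ℝ) * ‖x‖ ^ 2 - (1 / L) * J x}) :
    (0 : EReal) < ⨅ z ∈ M, ((‖z‖ ^ 2 : ℝ) : EReal) ∧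
    ∀ r : ℝ, 0 < r → ((r : EReal) < ⨅ z ∈ M, ((‖z‖ ^ 2 : ℝ) : EReal)) →
      ∃! y : X, ‖y‖ ^ 2 = r ∧ ∀ x : X, ‖x‖ ^ 2 = r → J x ≤ J y :=
  stmt17_general J J' hgrad hsw L hL hLip hJ' M hM
end

section
/- Let $X$ be a real Hilbert space, $x_0 \in X$, and $J : X \to \mathbb{R}$ sequentially weakly upper semicontinuous with $J'$ Lipschitz of constant $L$. For $r \in \mathbb{R}$ and $\lambda \in [0, 1/L]$, define $\Psi(x,\lambda) = \tfrac{1}{2}\|x - x_0\|^2 + \lambda(r - J(x))$. Then the functional $x \mapsto \sup_{\lambda \in [0,1/L]} \Psi(x,\lambda)$ equals $x \mapsto \tfrac{1}{2}\|x-x_0\|^2 + \tfrac{1}{L}\max(r - J(x), 0)$, and it is coercive on $X$. -/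
open scoped NNReal ENNReal

open Filter Set

theorem stmt18 {X : Type*} [NormedAddCommGroup X] [InnerProductSpace ℝ X] [CompleteSpace X]
    (J : X → ℝ) (J' : X → X)
    (hgrad : ∀ x : X, HasGradientAt J (J' x) x) (hcont : Continuous J')
    (hsw : ∀ (u : ℕ → X) (y : X),
      Tendsto (fun n => toWeakSpace ℝ X (u n)) atTop (nhds (toWeakSpace ℝ X y)) →
        limsup (fun n => J (u n)) atTop ≤ J y)
    (L : ℝ≥0) (hL : 0 < (L : ℝ)) (hLip : LipschitzWith L J')
    (x₀ : X) (r : ℝ) :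
    (∀ x : X,
      IsLUB ((fun lam : ℝ => (1 / 2 : ℝ) * ‖x - x₀‖ ^ 2 + lam * (r - J x)) ''
          Icc (0 : ℝ) (1 / L))
        ((1 / 2 : ℝ) * ‖x - x₀‖ ^ 2 + (1 / L) * max (r - J x) 0)) ∧
    Tendsto (fun x : X => (1 / 2 : ℝ) * ‖x - x₀‖ ^ 2 + (1 / L) * max (r - J x) 0)
      (comap norm atTop) atTop := by
  have hLinv : (0:ℝ) ≤ 1 / L := by positivity
  constructor
  · intro x
    set a := r - J x with ha
    constructor
    · rintro y ⟨lam, ⟨hl0, hl1⟩, rfl⟩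
      have h1 : lam * a ≤ (1/L) * max a 0 := by
        rcases le_or_gt 0 a with h | h
        · calc lam * a ≤ (1/(L:ℝ)) * a := mul_le_mul_of_nonneg_right hl1 h
            _ ≤ (1/(L:ℝ)) * max a 0 :=
              mul_le_mul_of_nonneg_left (le_max_left _ _) hLinv
        · have h2 : lam * a ≤ 0 := mul_nonpos_of_nonneg_of_nonpos hl0 h.le
          exact h2.trans (mul_nonneg hLinv (le_max_right _ _))
      simp only []
      linarith
    · intro b hb
      rcases le_or_gt 0 a with h | h
      · have hmx : max a 0 = a := max_eq_left h
        have hmem := hb ⟨1/(L:ℝ), ⟨hLinv, le_rfl⟩, rfl⟩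
        rw [hmx]
        exact hmem
      · have hmx : max a 0 = 0 := max_eq_right h.le
        have hmem := hb ⟨0, ⟨le_rfl, hLinv⟩, rfl⟩
        rw [hmx]
        simp only [zero_mul, add_zero] at hmem ⊢
        rw [mul_zero, add_zero]
        linarith
  · have h1 : Tendsto (fun x : X => ‖x‖ + (-‖x₀‖)) (comap norm atTop) atTop :=
      tendsto_atTop_add_const_right _ _ tendsto_comap
    have h2 : Tendsto (fun x : X => ‖x - x₀‖) (comap norm atTop) atTop := by
      apply tendsto_atTop_mono _ h1
      intro x
      have := norm_sub_norm_le x x₀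
      linarith
    have h3 : Tendsto (fun t : ℝ => (1/2 : ℝ) * t ^ 2) atTop atTop :=
      (tendsto_pow_atTop (two_ne_zero)).const_mul_atTop (by norm_num)
    have h4 : Tendsto (fun x : X => (1/2 : ℝ) * ‖x - x₀‖ ^ 2) (comap norm atTop) atTop :=
      h3.comp h2
    apply tendsto_atTop_mono _ h4
    intro x
    have : (0:ℝ) ≤ (1/(L:ℝ)) * max (r - J x) 0 :=
      mul_nonneg hLinv (le_max_right _ _)
    linarith
end
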